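/- arXiv:2601.00835 — 5 statements merged into one kernel-verified Lean document; each statement's English description precedes it below -/
import Mathlib

section
/- For all natural numbers x and y with x > 0 and y > 0, x divides y if and only if there exists a natural number z > 0 such that 2^y + z = z · 2^x + 1. -/
namespace Nat

theorem pow_sub_one_dvd_pow_sub_one_iff {a m n : ℕ} (ha : 1 < a) :
    a ^ m - 1 ∣ a ^ n - 1 ↔ m ∣ n := by
  have hpos : 0 < a := zero_lt_one.trans ha
  rw [← gcd_eq_left_iff_dvd, ← gcd_eq_left_iff_dvd, pow_sub_one_gcd_pow_sub_one,
    tsub_left_inj (one_le_pow _ _ hpos) (one_le_pow _ _ hpos)]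
  exact (Nat.pow_right_injective ha).eq_iff

theorem add_eq_mul_add_one_iff {p q z : ℕ} (hp : 1 ≤ p) (hq : 1 ≤ q) :
    q + z = z * p + 1 ↔ q - 1 = (p - 1) * z := by
  have hz : z ≤ p * z := Nat.le_mul_of_pos_left z hp
  rw [Nat.sub_one_mul, mul_comm z p]
  omega

end Nat

theorem dvd_iff_exists_pos_eq_general (x y : ℕ) (hy : 0 < y) :
    x ∣ y ↔ ∃ z : ℕ, 0 < z ∧ 2 ^ y + z = z * 2 ^ x + 1 := by
  have hequiv (z : ℕ) : 2 ^ y + z = z * 2 ^ x + 1 ↔ 2 ^ y - 1 = (2 ^ x - 1) * z :=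
    Nat.add_eq_mul_add_one_iff Nat.one_le_two_pow Nat.one_le_two_pow
  rw [← Nat.pow_sub_one_dvd_pow_sub_one_iff one_lt_two]
  constructor
  · rintro ⟨z, hz⟩
    have hmersenne : 2 ^ y - 1 ≠ 0 := Nat.sub_ne_zero_of_lt (Nat.one_lt_two_pow hy.ne')
    refine ⟨z, Nat.pos_of_ne_zero ?_, (hequiv z).mpr hz⟩
    rintro rfl
    exact hmersenne (by simpa using hz)
  · rintro ⟨z, -, h⟩
    exact ⟨z, (hequiv z).mp h⟩

theorem dvd_iff_exists_pos_eq (x y : ℕ) (hx : 0 < x) (hy : 0 < y) :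
    x ∣ y ↔ ∃ z : ℕ, 0 < z ∧ 2 ^ y + z = z * 2 ^ x + 1 :=
  dvd_iff_exists_pos_eq_general x y hy
end

section
/- For all natural numbers x and y with x ≥ 2 and y ≥ 1, if x divides y + x, x + 1 divides y + x, and Nat.log 2 y ≤ 2 · Nat.log 2 x + 1, then y = x², or y = 2x² + x, or y = 3x² + 2x. -/
theorem mem_S'_cases (x y : ℕ) (hx : 2 ≤ x) (hy : 1 ≤ y)
    (h1 : x ∣ y + x) (h2 : x + 1 ∣ y + x)
    (h3 : Nat.log 2 y ≤ 2 * Nat.log 2 x + 1) :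
    y = x ^ 2 ∨ y = 2 * x ^ 2 + x ∨ y = 3 * x ^ 2 + 2 * x := by
  have hco : Nat.Coprime x (x + 1) := by simp
  obtain ⟨k, hk⟩ := Nat.Coprime.mul_dvd_of_dvd_of_dvd hco h1 h2
  have hk1 : 1 ≤ k := by
    rcases Nat.eq_zero_or_pos k with h | h
    · subst h; simp at hk; omega
    · exact h
  have hk4 : k ≤ 3 := by
    by_contra h
    push_neg at h
    have hy4 : 4 * x ^ 2 ≤ y := by nlinarith
    set L := Nat.log 2 x with hLdef
    have hL : 2 ^ L ≤ x := Nat.pow_log_le_self 2 (by omega)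
    have h2y : 2 ^ (2 * L + 2) ≤ y := by
      calc 2 ^ (2 * L + 2) = 4 * (2 ^ L) ^ 2 := by ring
        _ ≤ 4 * x ^ 2 := Nat.mul_le_mul_left 4 (Nat.pow_le_pow_left hL 2)
        _ ≤ y := hy4
    have := (Nat.le_log_iff_pow_le (by norm_num) (by omega)).mpr h2y
    omega
  interval_cases k
  · left; nlinarith
  · right; left; nlinarith
  · right; right; nlinarith
end

section
/- For all natural numbers x and y with x ≥ 2 and y ≥ 1, the following are equivalent: (i) y = x²; (ii) x divides y + x, x + 1 divides y + x, Nat.log 2 y ≤ 2 · Nat.log 2 x + 1, x + 2 divides y + 2x, and x + 3 divides y + 3x. -/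
/-!
Only the converse needs an idea. The divisibilities by `x`, `x + 1` and `x + 2` say that all three
divide `y - x²`, hence `x (x + 1) (x + 2) ∣ 2 (y - x²)`. The logarithmic bound gives `y < 4 x²`, so
`|2 (y - x²)| < 6 x² ≤ x (x + 1) (x + 2)`, which forces `y = x²`.
-/

namespace Nat

theorem log_mul_le_add_add_one (b m n : ℕ) : log b (m * n) ≤ log b m + log b n + 1 := by
  rcases le_or_gt b 1 with hb | hb
  · simp [log_of_left_le_one hb]
  have hmn : m * n < b ^ (log b m + log b n + 2) := by
    rw [show log b m + log b n + 2 = (log b m + 1) + (log b n + 1) by ring, pow_add]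
    exact mul_lt_mul'' (lt_pow_succ_log_self hb m) (lt_pow_succ_log_self hb n)
  have := log_lt_of_lt_pow' (by omega) hmn
  omega

theorem lt_sq_mul_sq_of_log_le {b x y : ℕ} (hb : 1 < b) (hx : x ≠ 0)
    (h : log b y ≤ 2 * log b x + 1) : y < b ^ 2 * x ^ 2 :=
  calc y < b ^ (log b y + 1) := lt_pow_succ_log_self hb y
    _ ≤ b ^ (2 * log b x + 2) := Nat.pow_le_pow_right hb.le (by omega)
    _ = b ^ 2 * (b ^ log b x) ^ 2 := by ring
    _ ≤ b ^ 2 * x ^ 2 := by gcongr; exact pow_log_le_self b hx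

end Nat

theorem dvd_sub_sq_of_dvd_add_mul {R : Type*} [CommRing R] {a b k : R} (h : a + k ∣ b + k * a) :
    a + k ∣ b - a ^ 2 := by
  rwa [show b + k * a = b - a ^ 2 + (a + k) * a by ring, dvd_add_left (dvd_mul_right _ _)] at h

theorem mul_add_one_mul_add_two_dvd_two_mul {R : Type*} [CommRing R] {a n : R} (h₀ : a ∣ n)
    (h₁ : a + 1 ∣ n) (h₂ : a + 2 ∣ n) : a * (a + 1) * (a + 2) ∣ 2 * n := by
  obtain ⟨k, rfl⟩ := (IsCoprime.add_one_right_of_dvd (dvd_refl a)).mul_dvd h₀ h₁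
  have h2k : a + 2 ∣ 2 * k := by
    rwa [show a * (a + 1) * k = 2 * k + (a + 2) * ((a - 1) * k) by ring,
      dvd_add_left (dvd_mul_right _ _)] at h₂
  obtain ⟨m, hm⟩ := h2k
  exact ⟨m, by linear_combination a * (a + 1) * hm⟩

theorem Int.abs_two_mul_sub_sq_lt {x y : ℤ} (hx : 1 ≤ x) (hy₀ : 0 ≤ y) (hy : y < 4 * x ^ 2) :
    |2 * (y - x ^ 2)| < x * (x + 1) * (x + 2) := by
  -- `x (x + 1) (x + 2) - 6 x² = x (x - 1) (x - 2)`
  have hprod : 0 ≤ (x - 1) * (x - 2) := by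
    rcases (show x = 1 ∨ 2 ≤ x by omega) with rfl | hx₂
    · norm_num
    · nlinarith
  rw [abs_lt]
  constructor <;> nlinarith

theorem sq_characterization_general (x y : ℕ) (hx : 2 ≤ x) :
    y = x ^ 2 ↔
      x ∣ y + x ∧ x + 1 ∣ y + x ∧ Nat.log 2 y ≤ 2 * Nat.log 2 x + 1 ∧
        x + 2 ∣ y + 2 * x ∧ x + 3 ∣ y + 3 * x := by
  constructor
  · rintro rfl
    refine ⟨⟨x + 1, by ring⟩, ⟨x, by ring⟩, ?_, ⟨x, by ring⟩, ⟨x, by ring⟩⟩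
    simpa [sq, two_mul] using Nat.log_mul_le_add_add_one 2 x x
  · rintro ⟨h₀, h₁, hlog, h₂, -⟩
    have hy : y < 4 * x ^ 2 := by
      simpa using Nat.lt_sq_mul_sq_of_log_le one_lt_two (by omega) hlog
    zify at h₀ h₁ h₂ hy ⊢
    have hdvd : (x : ℤ) * (x + 1) * (x + 2) ∣ 2 * (y - x ^ 2) :=
      mul_add_one_mul_add_two_dvd_two_mul
        (dvd_sub (dvd_add_self_right.mp h₀) (dvd_pow_self _ two_ne_zero))
        (dvd_sub_sq_of_dvd_add_mul ((one_mul (x : ℤ)).symm ▸ h₁))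
        (dvd_sub_sq_of_dvd_add_mul h₂)
    have := Int.eq_zero_of_abs_lt_dvd hdvd (Int.abs_two_mul_sub_sq_lt (by omega) (by omega) hy)
    omega

theorem sq_characterization (x y : ℕ) (hx : 2 ≤ x) (hy : 1 ≤ y) :
    y = x ^ 2 ↔
      x ∣ y + x ∧ x + 1 ∣ y + x ∧ Nat.log 2 y ≤ 2 * Nat.log 2 x + 1 ∧
        x + 2 ∣ y + 2 * x ∧ x + 3 ∣ y + 3 * x :=
  sq_characterization_general x y hx
end

section
/- For all natural numbers x and y with x ≥ 2 and y ≥ 2, y = x² if and only if there exist natural numbers z₁, z₂, z₃, z₄, l, m, all positive, such that: 2^(y+x) + z₁ = z₁ · 2^x + 1, 2^(y+x) + z₂ = z₂ · 2^(x+1) + 1, 2^(y+2x) + z₃ = z₃ · 2^(x+2) + 1, 2^(y+3x) + z₄ = z₄ · 2^(x+3) + 1, 2^l ≤ x, x < 2^(l+1), 2^m ≤ y, y < 2^(m+1), and m ≤ 2·l + 1. -/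
private lemma pow_sub_one_dvd_of_dvd {a b : ℕ} (h : a ∣ b) : (2:ℕ)^a - 1 ∣ 2^b - 1 := by
  obtain ⟨k, rfl⟩ := h
  exact Nat.pow_sub_one_dvd_pow_sub_one 2 (Dvd.intro k rfl)

private lemma dvd_of_pow_sub_one_dvd {a : ℕ} (ha : 0 < a) :
    ∀ b, ((2:ℕ)^a - 1 ∣ 2^b - 1) → a ∣ b := by
  intro b
  induction b using Nat.strong_induction_on with
  | _ b ih =>
    intro h
    rcases Nat.lt_or_ge b a with hba | hab
    · rcases Nat.eq_zero_or_pos b with rfl | hb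
      · exact dvd_zero a
      · exfalso
        have h1 : 1 < (2:ℕ)^b := Nat.one_lt_two_pow hb.ne'
        have h2 := Nat.le_of_dvd (by omega) h
        have h3 : (2:ℕ)^b < 2^a := Nat.pow_lt_pow_right one_lt_two hba
        omega
    · have hpow : (2:ℕ)^(b-a) * 2^a = 2^b := by rw [← pow_add]; congr 1; omega
      have h1 : 1 ≤ (2:ℕ)^a := Nat.one_le_two_pow
      have h2 : 1 ≤ (2:ℕ)^(b-a) := Nat.one_le_two_pow
      have h3 : (2:ℕ)^(b-a) ≤ 2^b := Nat.pow_le_pow_right (by norm_num) (by omega)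
      have key : (2:ℕ)^b - 1 = 2^(b-a) * (2^a - 1) + (2^(b-a) - 1) := by
        rw [Nat.mul_sub, mul_one, hpow]; omega
      have hdvd : (2:ℕ)^a - 1 ∣ 2^(b-a) - 1 := by
        rw [key] at h
        exact (Nat.dvd_add_right (Dvd.intro_left _ rfl)).mp h
      obtain ⟨k, hk⟩ := ih (b - a) (by omega) hdvd
      exact ⟨k + 1, by rw [Nat.mul_add, mul_one, ← hk]; omega⟩

private lemma eq_iff_dvd {a b : ℕ} (ha : 0 < a) (hb : 0 < b) :
    (∃ z : ℕ, 0 < z ∧ 2^b + z = z * 2^a + 1) ↔ a ∣ b := by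
  have h1 : 1 ≤ (2:ℕ)^a := Nat.one_le_two_pow
  have hb1 : 1 < (2:ℕ)^b := Nat.one_lt_two_pow hb.ne'
  constructor
  · rintro ⟨z, hz, heq⟩
    apply dvd_of_pow_sub_one_dvd ha
    refine ⟨z, ?_⟩
    have key : ((2:ℕ)^a - 1) * z = z * 2^a - z := by
      rw [Nat.sub_mul, one_mul, mul_comm]
    rw [key]
    have h2 : z ≤ z * 2^a := Nat.le_mul_of_pos_right z (by positivity)
    omega
  · intro h
    obtain ⟨c, hc⟩ := pow_sub_one_dvd_of_dvd h
    have key : ((2:ℕ)^a - 1) * c = 2^a * c - c := by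
      rw [Nat.sub_mul, one_mul]
    have h2 : c ≤ 2^a * c := Nat.le_mul_of_pos_left c (by positivity)
    have hcpos : 0 < c := by
      rcases Nat.eq_zero_or_pos c with rfl | h'
      · simp at hc; omega
      · exact h'
    refine ⟨c, hcpos, ?_⟩
    rw [key] at hc
    have : 2^a * c = c * 2^a := mul_comm _ _
    omega

theorem sq_diophantine (x y : ℕ) (hx : 2 ≤ x) (hy : 2 ≤ y) :
    y = x ^ 2 ↔
      ∃ z₁ z₂ z₃ z₄ l m : ℕ,
        0 < z₁ ∧ 0 < z₂ ∧ 0 < z₃ ∧ 0 < z₄ ∧ 0 < l ∧ 0 < m ∧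
        2 ^ (y + x) + z₁ = z₁ * 2 ^ x + 1 ∧
        2 ^ (y + x) + z₂ = z₂ * 2 ^ (x + 1) + 1 ∧
        2 ^ (y + 2 * x) + z₃ = z₃ * 2 ^ (x + 2) + 1 ∧
        2 ^ (y + 3 * x) + z₄ = z₄ * 2 ^ (x + 3) + 1 ∧
        2 ^ l ≤ x ∧ x < 2 ^ (l + 1) ∧
        2 ^ m ≤ y ∧ y < 2 ^ (m + 1) ∧
        m ≤ 2 * l + 1 := by
  have hx0 : 0 < x := by omega
  have hyx : 0 < y + x := by omega
  constructor
  · rintro rfl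
    obtain ⟨z₁, hz₁, he₁⟩ := (eq_iff_dvd hx0 hyx).mpr ⟨x + 1, by ring⟩
    obtain ⟨z₂, hz₂, he₂⟩ := (eq_iff_dvd (a := x+1) (by omega) hyx).mpr ⟨x, by ring⟩
    obtain ⟨z₃, hz₃, he₃⟩ := (eq_iff_dvd (a := x+2) (b := x^2 + 2*x) (by omega) (by positivity)).mpr ⟨x, by ring⟩
    obtain ⟨z₄, hz₄, he₄⟩ := (eq_iff_dvd (a := x+3) (b := x^2 + 3*x) (by omega) (by positivity)).mpr ⟨x, by ring⟩
    refine ⟨z₁, z₂, z₃, z₄, Nat.log 2 x, Nat.log 2 (x^2), hz₁, hz₂, hz₃, hz₄,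
      Nat.log_pos one_lt_two hx, Nat.log_pos one_lt_two (by nlinarith), he₁, he₂, he₃, he₄,
      Nat.pow_log_le_self 2 (by omega), Nat.lt_pow_succ_log_self one_lt_two x,
      Nat.pow_log_le_self 2 (by positivity), Nat.lt_pow_succ_log_self one_lt_two _, ?_⟩
    have hxl : x < 2 ^ (Nat.log 2 x + 1) := Nat.lt_pow_succ_log_self one_lt_two x
    have hsq : x^2 < 2 ^ (2 * Nat.log 2 x + 2) := by
      have : x^2 < (2 ^ (Nat.log 2 x + 1))^2 := by nlinarith
      calc x^2 < (2 ^ (Nat.log 2 x + 1))^2 := this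
        _ = 2 ^ (2 * Nat.log 2 x + 2) := by rw [← pow_mul]; ring_nf
    have := (Nat.log_lt_iff_lt_pow one_lt_two (y := x^2) (by positivity)).mpr hsq
    omega
  · rintro ⟨z₁, z₂, z₃, z₄, l, m, hz₁, hz₂, hz₃, hz₄, hl, hm, he₁, he₂, he₃, he₄,
      hlx, hxl, hmy, hym, hml⟩
    -- divisibility facts
    have d0 : x ∣ y + x := (eq_iff_dvd hx0 hyx).mp ⟨z₁, hz₁, he₁⟩
    have d1 : x + 1 ∣ y + x := (eq_iff_dvd (by omega) hyx).mp ⟨z₂, hz₂, he₂⟩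
    have d2 : x + 2 ∣ y + 2 * x := (eq_iff_dvd (by omega) (by omega)).mp ⟨z₃, hz₃, he₃⟩
    have d3 : x + 3 ∣ y + 3 * x := (eq_iff_dvd (by omega) (by omega)).mp ⟨z₄, hz₄, he₄⟩
    -- y < 4 * x^2
    have hy4 : y < 4 * x^2 := by
      have h1 : y < 2 ^ (m + 1) := hym
      have h2 : (2:ℕ) ^ (m + 1) ≤ 2 ^ (2 * l + 2) := Nat.pow_le_pow_right (by norm_num) (by omega)
      have h3 : (2:ℕ) ^ (2 * l + 2) = 4 * (2^l)^2 := by rw [← pow_mul]; ring_nf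
      have h4 : 4 * (2^l)^2 ≤ 4 * x^2 := by
        have := Nat.pow_le_pow_left hlx 2; omega
      omega
    -- int divisibilities of y - x^2
    have int_dvd : ∀ k : ℕ, (x + k ∣ y + k * x) → ((x + k : ℕ) : ℤ) ∣ (y : ℤ) - (x:ℤ)^2 := by
      intro k hk
      obtain ⟨c, hc⟩ := hk
      have hc' : (y : ℤ) + k * x = (x + k) * c := by exact_mod_cast hc
      exact ⟨(c : ℤ) - x, by push_cast; linarith [hc']⟩
    have D0 := int_dvd 0 (by simpa using d0)
    have D1 := int_dvd 1 (by simpa [one_mul] using d1)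
    have D2 := int_dvd 2 d2
    have D3 := int_dvd 3 d3
    rcases Nat.lt_or_ge x 6 with hx6 | hx6
    · -- small cases
      have n0 : x ∣ y := (Nat.dvd_add_right (dvd_refl x)).mp (by simpa [mul_comm] using d0)
      clear he₁ he₂ he₃ he₄ D0 D1 D2 D3 hmy hym hlx hxl hml d0 hz₁ hz₂ hz₃ hz₄ hl hm hyx hx0
      interval_cases x <;> norm_num at hy4 d1 d2 d3 ⊢ <;> omega
    · -- large case: show y = x^2
      by_contra hne
      clear he₁ he₂ he₃ he₄ hz₁ hz₂ hz₃ hz₄ hlx hxl hmy hym hml hl hm d0 d1 d2 d3 hyx int_dvd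
      -- d = |y - x^2| as a natural number
      obtain ⟨d, hd, hdpos⟩ : ∃ d : ℕ, ((d : ℤ) = (y:ℤ) - (x:ℤ)^2 ∨ (d : ℤ) = (x:ℤ)^2 - (y:ℤ)) ∧ 0 < d := by
        rcases Nat.lt_or_ge y (x^2) with h | h
        · exact ⟨x^2 - y, Or.inr (by push_cast [Nat.cast_sub h.le]; ring), by omega⟩
        · refine ⟨y - x^2, Or.inl (by push_cast [Nat.cast_sub h]; ring), ?_⟩
          have : y ≠ x^2 := hne
          omega
      have nat_dvd : ∀ k : ℕ, ((x + k : ℕ) : ℤ) ∣ (y : ℤ) - (x:ℤ)^2 → x + k ∣ d := by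
        intro k hk
        have : ((x + k : ℕ) : ℤ) ∣ (d : ℤ) := by
          rcases hd with h | h
          · rw [h]; exact hk
          · rw [h, ← neg_sub]; exact dvd_neg.mpr hk
        exact_mod_cast this
      have e0 := nat_dvd 0 D0
      have e1 := nat_dvd 1 D1
      have e2 := nat_dvd 2 D2
      have e3 := nat_dvd 3 D3
      simp only [Nat.add_zero] at e0
      have c01 : Nat.Coprime x (x + 1) := Nat.coprime_self_add_right.mpr (Nat.coprime_one_right x)
      have c23 : Nat.Coprime (x + 2) (x + 3) := by
        have := Nat.coprime_self_add_right (m := x + 2) (n := 1)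
        simpa [add_assoc] using this.mpr (Nat.coprime_one_right _)
      have hA : x * (x + 1) ∣ d := c01.mul_dvd_of_dvd_of_dvd e0 e1
      have hB : (x + 2) * (x + 3) ∣ d := c23.mul_dvd_of_dvd_of_dvd e2 e3
      set A := x * (x + 1) with hAdef
      set B := (x + 2) * (x + 3) with hBdef
      have hL : Nat.lcm A B ∣ d := Nat.lcm_dvd hA hB
      have hled : Nat.lcm A B ≤ d := Nat.le_of_dvd hdpos hL
      set g := Nat.gcd A B with hgdef
      have hg12 : g ∣ 12 := by
        have hgA : (g : ℤ) ∣ (A : ℤ) := Int.natCast_dvd_natCast.mpr (Nat.gcd_dvd_left A B)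
        have hgB : (g : ℤ) ∣ (B : ℤ) := Int.natCast_dvd_natCast.mpr (Nat.gcd_dvd_right A B)
        have h12 : (A : ℤ) * (4 * x + 14) - (B : ℤ) * (4 * x - 2) = 12 := by
          rw [hAdef, hBdef]; push_cast; ring
        have : (g : ℤ) ∣ 12 := h12 ▸ (hgA.mul_right _).sub (hgB.mul_right _)
        exact_mod_cast this
      have hg : g ≤ 12 := Nat.le_of_dvd (by norm_num) hg12
      have hmul : g * Nat.lcm A B = A * B := Nat.gcd_mul_lcm A B
      -- d < 3 x^2
      have hdlt : d < 3 * x^2 := by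
        rcases hd with h | h
        · have : (d : ℤ) < 3 * (x:ℤ)^2 := by
            rw [h]
            have : (y : ℤ) < 4 * (x:ℤ)^2 := by exact_mod_cast hy4
            linarith
          exact_mod_cast this
        · have hx1 : (1:ℤ) ≤ (x:ℤ) := by exact_mod_cast hx0
          have hx2 : (1:ℤ) ≤ (x:ℤ)^2 := by nlinarith
          have : (d : ℤ) < 3 * (x:ℤ)^2 := by
            rw [h]
            have : (0:ℤ) ≤ y := by positivity
            linarith
          exact_mod_cast this
      have hAB : A * B ≤ 12 * d := by
        calc A * B = g * Nat.lcm A B := hmul.symm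
          _ ≤ 12 * Nat.lcm A B := Nat.mul_le_mul_right _ hg
          _ ≤ 12 * d := Nat.mul_le_mul_left _ hled
      have hABge : x^4 ≤ A * B := by
        have t1 : x * x ≤ A := by rw [hAdef]; exact Nat.mul_le_mul_left x (by omega)
        have t2 : x * x ≤ B := by rw [hBdef]; exact Nat.mul_le_mul (by omega) (by omega)
        calc x^4 = (x * x) * (x * x) := by ring
          _ ≤ A * B := Nat.mul_le_mul t1 t2
      have h36 : 36 ≤ x^2 := by
        rw [pow_two]
        calc 36 = 6 * 6 := by norm_num
          _ ≤ x * x := Nat.mul_le_mul hx6 hx6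
      have h36' : 36 * x^2 ≤ x^4 := by
        calc 36 * x^2 ≤ x^2 * x^2 := Nat.mul_le_mul_right _ h36
          _ = x^4 := by ring
      omega
end

section
/- For all natural numbers x, y, z with x ≥ 2, y ≥ 2 and z ≥ 2, z = x·y if and only if there exist natural numbers u, v, w such that Q(x, u), Q(y, v), Q(x + y, w), and z + z + u + v = w, where Q(a, b) denotes the conjunction: a divides b + a, a + 1 divides b + a, Nat.log 2 b ≤ 2 · Nat.log 2 a + 1, a + 2 divides b + 2a, and a + 3 divides b + 3a (with b ≥ 1 implicit). -/
/-
`Q a b` forces `b = a ^ 2`. Each divisibility in `Q` says `a + k ∣ b - a ^ 2` (`k = 0, 1, 2, 3`), so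
`a (a + 1)` and `(a + 2) (a + 3)` both divide `b - a ^ 2`, while the logarithm bound gives
`0 ≤ b < 4 a ^ 2`. Writing `b - a ^ 2 = e (a + 2) (a + 3)` leaves `e ∈ {0, 1, 2}`, and for `e ≠ 0`
the first divisibility becomes `a (a + 1) ∣ e (4 a + 6)`, which the size bound
`e (a + 2) (a + 3) < 3 a ^ 2` rules out. With `Q` meaning squaring, `z = x y` is equivalent to
`2 z + x ^ 2 + y ^ 2 = (x + y) ^ 2`.
-/

/-- The predicate `Q a b` from the paper's squaring characterization:
for `a ≥ 2`, `b ≥ 1`, it holds exactly when `b = a ^ 2`. -/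
def Q (a b : ℕ) : Prop :=
  a ∣ b + a ∧ a + 1 ∣ b + a ∧ Nat.log 2 b ≤ 2 * Nat.log 2 a + 1 ∧
    a + 2 ∣ b + 2 * a ∧ a + 3 ∣ b + 3 * a

lemma lt_four_mul_sq_of_log_le {a b : ℕ} (ha : a ≠ 0) (h : Nat.log 2 b ≤ 2 * Nat.log 2 a + 1) :
    b < 4 * a ^ 2 :=
  calc b < 2 ^ (Nat.log 2 b + 1) := Nat.lt_pow_succ_log_self (by norm_num) b
    _ ≤ 2 ^ (2 * Nat.log 2 a + 2) := Nat.pow_le_pow_right (by norm_num) (by omega)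
    _ = 4 * (2 ^ Nat.log 2 a) ^ 2 := by ring
    _ ≤ 4 * a ^ 2 := by gcongr; exact Nat.pow_log_le_self 2 ha

lemma log_sq_le (a : ℕ) : Nat.log 2 (a ^ 2) ≤ 2 * Nat.log 2 a + 1 := by
  rcases Nat.eq_zero_or_pos a with rfl | ha
  · simp
  have hlt : a ^ 2 < 2 ^ (2 * Nat.log 2 a + 2) :=
    calc a ^ 2 < (2 ^ (Nat.log 2 a + 1)) ^ 2 := by
          gcongr; exact Nat.lt_pow_succ_log_self (by norm_num) a
      _ = 2 ^ (2 * Nat.log 2 a + 2) := by ring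
  have := Nat.log_lt_of_lt_pow (by positivity) hlt
  omega

lemma intCast_dvd_sub_sq {a b k : ℕ} (h : a + k ∣ b + k * a) : ((a : ℤ) + k) ∣ b - a ^ 2 := by
  have h' : ((a : ℤ) + k) ∣ b + k * a := by exact_mod_cast Int.natCast_dvd_natCast.2 h
  rw [show (b : ℤ) - a ^ 2 = b + k * a - a * (a + k) by ring]
  exact h'.sub (dvd_mul_left _ _)

lemma eq_sq_of_dvd_of_lt {a b : ℕ} (h01 : (a : ℤ) * (a + 1) ∣ b - a ^ 2)
    (h23 : ((a : ℤ) + 2) * (a + 3) ∣ b - a ^ 2) (hb : b < 4 * a ^ 2) : b = a ^ 2 := by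
  obtain ⟨e, he⟩ := h23
  have hb' : (b : ℤ) < 4 * a ^ 2 := by exact_mod_cast hb
  have ha : (0 : ℤ) ≤ a := by positivity
  have he0 : 0 ≤ e := by nlinarith
  have he2 : e ≤ 2 := by nlinarith
  rcases he0.eq_or_lt with rfl | hpos
  · have : (b : ℤ) = a ^ 2 := by linarith
    exact_mod_cast this
  exfalso
  have hd : (a : ℤ) * (a + 1) ∣ e * (4 * a + 6) := by
    rw [show e * (4 * a + 6) = (b - a ^ 2) - e * (a * (a + 1)) by rw [he]; ring]
    exact h01.sub (dvd_mul_left _ _)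
  have hle := Int.le_of_dvd (by positivity) hd
  interval_cases e
  · -- `(a + 2) (a + 3) < 3 a ^ 2` forces `a ≥ 4`, and `a (a + 1) ≤ 4 a + 6` forces `a ≤ 4`
    have h4 : (a : ℤ) = 4 := by
      have : 4 ≤ (a : ℤ) := by nlinarith
      nlinarith
    rw [h4] at hd
    norm_num at hd
  · nlinarith

theorem Q_iff_eq_sq {a b : ℕ} : Q a b ↔ b = a ^ 2 := by
  refine ⟨fun ⟨h0, h1, hlog, h2, h3⟩ => ?_, ?_⟩
  · rcases Nat.eq_zero_or_pos a with rfl | ha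
    · simpa using h0
    refine eq_sq_of_dvd_of_lt ?_ ?_ (lt_four_mul_sq_of_log_le ha.ne' hlog)
    · exact IsCoprime.mul_dvd ⟨-1, 1, by ring⟩
        (by simpa using intCast_dvd_sub_sq (k := 0) (by simpa using h0))
        (by simpa using intCast_dvd_sub_sq (k := 1) (by simpa using h1))
    · exact IsCoprime.mul_dvd ⟨-1, 1, by ring⟩
        (by simpa using intCast_dvd_sub_sq (k := 2) h2)
        (by simpa using intCast_dvd_sub_sq (k := 3) h3)
  · rintro rfl
    exact ⟨⟨a + 1, by ring⟩, ⟨a, by ring⟩, log_sq_le a, ⟨a, by ring⟩, ⟨a, by ring⟩⟩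

theorem mul_diophantine_general (x y z : ℕ) :
    z = x * y ↔
      ∃ u v w : ℕ, Q x u ∧ Q y v ∧ Q (x + y) w ∧ z + z + u + v = w := by
  simp only [Q_iff_eq_sq, exists_and_left, exists_eq_left]
  rw [show (x + y) ^ 2 = x * y + x * y + x ^ 2 + y ^ 2 by ring]
  omega

theorem mul_diophantine (x y z : ℕ) (hx : 2 ≤ x) (hy : 2 ≤ y) (hz : 2 ≤ z) :
    z = x * y ↔
      ∃ u v w : ℕ, Q x u ∧ Q y v ∧ Q (x + y) w ∧ z + z + u + v = w :=
  mul_diophantine_general x y z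
end
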